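/- There exists an absolute constant C > 0 with the following property. Let (x_t)_{0≤t≤T} be iterates x_{t+1} = x_t − γ∇f_{i_t}(x_t) with 0 < γ ≤ 1/(8√3·L) and τ = ⌊1/(8√3·L·γ)⌋, and suppose the fixed index sequence (i_t) satisfies the variance bound ‖∑_{t=kτ}^{min{kτ+j,T}} (∇f_{i_t}(x) − ∇f(x))‖² ≤ τ·σ_SGD² for all x ∈ ℝ^d, all k = 0,…,⌊T/τ⌋ and all j = 0,…,τ−1, where σ_SGD² := sup_{x∈ℝ^d} (1/n)∑_{i=1}^{n} ‖∇f_i(x) − ∇f(x)‖² is finite. If f is bounded below with f* = inf f, then (1/(T+1)) ∑_{t=0}^{T} ‖∇f(x_t)‖² ≤ C·( (f(x_0) − f*)/(γ(T+1)) + L·γ·σ_SGD² ). -/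

import Mathlib

open scoped BigOperators
set_option maxHeartbeats 8000000

section Aux
set_option linter.unusedSectionVars false
variable {E : Type*} [NormedAddCommGroup E] [InnerProductSpace ℝ E] [CompleteSpace E]

lemma line_hasDerivAt (x v : E) (t : ℝ) : HasDerivAt (fun s : ℝ => x + s • v) v t := by
  simpa using ((hasDerivAt_id t).smul_const v).const_add x

lemma comp_line_hasDerivAt {f : E → ℝ} (hf : Differentiable ℝ f) (x v : E) (t : ℝ) :
    HasDerivAt (fun s : ℝ => f (x + s • v)) (inner ℝ (gradient f (x + t • v)) v : ℝ) t := by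
  have h1 := (hf (x + t • v)).hasGradientAt.hasFDerivAt
  have h2 := h1.comp_hasDerivAt t (line_hasDerivAt x v t)
  simpa [InnerProductSpace.toDual_apply_apply, Function.comp_def] using h2

lemma descent_lemma {f : E → ℝ} {L : ℝ} (hL : 0 ≤ L) (hf : Differentiable ℝ f)
    (hlip : ∀ p q : E, ‖gradient f p - gradient f q‖ ≤ L * ‖p - q‖) (x y : E) :
    f y ≤ f x + (inner ℝ (gradient f x) (y - x) : ℝ) + L / 2 * ‖y - x‖ ^ 2 := by
  set v := y - x with hv
  set φ : ℝ → ℝ := fun t =>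
    f (x + t • v) - (inner ℝ (gradient f x) v : ℝ) * t - L / 2 * ‖v‖ ^ 2 * t ^ 2 with hφ
  have hφd : ∀ t : ℝ, HasDerivAt φ
      ((inner ℝ (gradient f (x + t • v)) v : ℝ) - (inner ℝ (gradient f x) v : ℝ) * 1
        - L / 2 * ‖v‖ ^ 2 * (((2:ℕ):ℝ) * t ^ (2 - 1))) t := by
    intro t
    exact ((comp_line_hasDerivAt hf x v t).sub
        ((hasDerivAt_id t).const_mul (inner ℝ (gradient f x) v : ℝ))).sub
        ((hasDerivAt_pow 2 t).const_mul (L / 2 * ‖v‖ ^ 2))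
  have hdiffφ : Differentiable ℝ φ := fun t => (hφd t).differentiableAt
  have hanti : AntitoneOn φ (Set.Icc (0:ℝ) 1) := by
    apply antitoneOn_of_deriv_nonpos (convex_Icc 0 1) hdiffφ.continuous.continuousOn
      hdiffφ.differentiableOn
    intro t ht
    rw [interior_Icc] at ht
    rw [(hφd t).deriv]
    have h2 : (inner ℝ (gradient f (x + t • v)) v : ℝ) - (inner ℝ (gradient f x) v : ℝ)
        ≤ L * ‖v‖ ^ 2 * t := by
      have h3 : (inner ℝ (gradient f (x + t • v)) v : ℝ) - (inner ℝ (gradient f x) v : ℝ)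
          = (inner ℝ (gradient f (x + t • v) - gradient f x) v : ℝ) := by
        rw [inner_sub_left]
      rw [h3]
      calc (inner ℝ (gradient f (x + t • v) - gradient f x) v : ℝ)
          ≤ ‖gradient f (x + t • v) - gradient f x‖ * ‖v‖ := real_inner_le_norm _ _
        _ ≤ (L * ‖x + t • v - x‖) * ‖v‖ := by
            apply mul_le_mul_of_nonneg_right (hlip _ _) (norm_nonneg _)
        _ = L * ‖v‖ ^ 2 * t := by
            simp [norm_smul, abs_of_pos ht.1]
            ring
    norm_num at h2 ⊢
    linarith
  have h01 := hanti (Set.left_mem_Icc.mpr zero_le_one) (Set.right_mem_Icc.mpr zero_le_one)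
    zero_le_one
  have he0 : φ 0 = f x := by simp [hφ]
  have he1 : φ 1 = f y - (inner ℝ (gradient f x) v : ℝ) - L / 2 * ‖v‖ ^ 2 := by
    simp [hφ, hv]
  rw [he0, he1] at h01
  have : ‖y - x‖ ^ 2 = ‖v‖ ^ 2 := by rw [hv]
  linarith [h01]

lemma grad_sq_le {f : E → ℝ} {L fstar : ℝ} (hL : 0 < L) (hf : Differentiable ℝ f)
    (hlip : ∀ p q : E, ‖gradient f p - gradient f q‖ ≤ L * ‖p - q‖)
    (hlow : ∀ y, fstar ≤ f y) (p : E) :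
    ‖gradient f p‖ ^ 2 ≤ 2 * L * (f p - fstar) := by
  have h := descent_lemma hL.le hf hlip p (p - L⁻¹ • gradient f p)
  have h1 : p - L⁻¹ • gradient f p - p = -(L⁻¹ • gradient f p) := by abel
  rw [h1] at h
  have h2 : (inner ℝ (gradient f p) (-(L⁻¹ • gradient f p)) : ℝ) = -(L⁻¹ * ‖gradient f p‖ ^ 2) := by
    rw [inner_neg_right, real_inner_smul_right, real_inner_self_eq_norm_sq]
  have h3 : ‖-(L⁻¹ • gradient f p)‖ ^ 2 = L⁻¹ ^ 2 * ‖gradient f p‖ ^ 2 := by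
    rw [norm_neg, norm_smul]
    simp [abs_of_pos hL]
    ring
  rw [h2, h3] at h
  have h4 := hlow (p - L⁻¹ • gradient f p)
  have hL' : L ≠ 0 := ne_of_gt hL
  have e : f p + -(L⁻¹ * ‖gradient f p‖ ^ 2) + L / 2 * (L⁻¹ ^ 2 * ‖gradient f p‖ ^ 2)
      = f p - ‖gradient f p‖ ^ 2 / (2 * L) := by
    field_simp
    ring
  rw [e] at h
  have h6 : ‖gradient f p‖ ^ 2 / (2 * L) ≤ f p - fstar := by linarith
  calc ‖gradient f p‖ ^ 2 = ‖gradient f p‖ ^ 2 / (2 * L) * (2 * L) := by field_simp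
    _ ≤ (f p - fstar) * (2 * L) := by
        apply mul_le_mul_of_nonneg_right h6 (by positivity)
    _ = 2 * L * (f p - fstar) := by ring

lemma avg_hasGradientAt {n : ℕ} (f' : Fin n → E → ℝ) (hdiff : ∀ i, Differentiable ℝ (f' i))
    (p : E) :
    HasGradientAt (fun q => (1 / n : ℝ) * ∑ i, f' i q)
      ((1 / n : ℝ) • ∑ i, gradient (f' i) p) p := by
  have h1 : HasFDerivAt (fun q => ∑ i, f' i q)
      (∑ i, InnerProductSpace.toDual ℝ E (gradient (f' i) p)) p :=
    HasFDerivAt.fun_sum fun i _ => ((hdiff i) p).hasGradientAt.hasFDerivAt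
  have h2 := h1.const_mul (1 / n : ℝ)
  have h3 := h2.hasGradientAt
  have h4 : (InnerProductSpace.toDual ℝ E).symm
      ((1 / n : ℝ) • ∑ i, InnerProductSpace.toDual ℝ E (gradient (f' i) p))
      = (1 / n : ℝ) • ∑ i, gradient (f' i) p := by
    rw [map_smul, map_sum]
    simp
    rfl
  rwa [h4] at h3

end Aux

/-- Convergence rate (eq. (5)) recovering the classical SGD rate: under the
variance bound σ_τ² ≤ τ·σ_SGD², for some absolute constant C > 0,
(1/(T+1)) ∑_t ‖∇f(x_t)‖² ≤ C·(F₀/(γ(T+1)) + Lγ·σ_SGD²). -/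
theorem stmt_11 :
    ∃ C : ℝ, 0 < C ∧
      ∀ (d n : ℕ), 1 ≤ d → 1 ≤ n →
      ∀ L : ℝ, 0 < L →
      ∀ f' : Fin n → EuclideanSpace ℝ (Fin d) → ℝ,
        (∀ i, Differentiable ℝ (f' i)) →
        (∀ i (x y : EuclideanSpace ℝ (Fin d)),
          ‖gradient (f' i) x - gradient (f' i) y‖ ≤ L * ‖x - y‖) →
      ∀ f : EuclideanSpace ℝ (Fin d) → ℝ,
        f = (fun x => (1 / n : ℝ) * ∑ i, f' i x) →
      ∀ γ : ℝ, 0 < γ → γ ≤ 1 / (8 * Real.sqrt 3 * L) →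
      ∀ (T : ℕ) (idx : ℕ → Fin n) (x : ℕ → EuclideanSpace ℝ (Fin d)),
        (∀ t, x (t + 1) = x t - γ • gradient (f' (idx t)) (x t)) →
      ∀ τ : ℕ, τ = ⌊1 / (8 * Real.sqrt 3 * L * γ)⌋₊ →
      ∀ σ2 : ℝ,
        (∀ y : EuclideanSpace ℝ (Fin d),
          (1 / n : ℝ) * ∑ i, ‖gradient (f' i) y - gradient f y‖ ^ 2 ≤ σ2) →
        (∀ y : EuclideanSpace ℝ (Fin d), ∀ k ≤ T / τ, ∀ j < τ,
          ‖∑ t ∈ Finset.Icc (k * τ) (min (k * τ + j) T),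
              (gradient (f' (idx t)) y - gradient f y)‖ ^ 2 ≤ (τ : ℝ) * σ2) →
      ∀ fstar : ℝ, (∀ y, fstar ≤ f y) → fstar = (⨅ y, f y) →
        (1 / (T + 1 : ℝ)) * ∑ t ∈ Finset.range (T + 1), ‖gradient f (x t)‖ ^ 2 ≤
          C * ((f (x 0) - fstar) / (γ * (T + 1)) + L * γ * σ2) := by
  refine ⟨2000, by norm_num, ?_⟩
  intro d n hd hn L hL f' hdiff hlip f hf γ hγ hγle T idx x hx τ hτ σ2 hσ hvar fstar hfstar _
  -- numeric facts about c = 8√3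
  have hs3 : Real.sqrt 3 ^ 2 = 3 := Real.sq_sqrt (by norm_num)
  have hs3' : 0 ≤ Real.sqrt 3 := Real.sqrt_nonneg 3
  have hc13 : (13:ℝ) ≤ 8 * Real.sqrt 3 := by nlinarith
  have hc14 : 8 * Real.sqrt 3 ≤ (14:ℝ) := by nlinarith
  set c : ℝ := 8 * Real.sqrt 3 with hc
  have hcpos : (0:ℝ) < c := by linarith
  have hcLγpos : 0 < c * L * γ := by positivity
  have hγc : c * L * γ ≤ 1 := by
    have h1 : c * L * γ ≤ c * L * (1 / (c * L)) := by
      apply mul_le_mul_of_nonneg_left hγle (by positivity)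
    have h2 : c * L * (1 / (c * L)) = 1 := by field_simp
    linarith
  have hz1 : (1:ℝ) ≤ 1 / (c * L * γ) := by
    rw [le_div_iff₀ hcLγpos]; linarith
  have hτ1 : 1 ≤ τ := by
    rw [hτ]; exact Nat.le_floor (by exact_mod_cast hz1)
  have hτpos : (0:ℝ) < (τ:ℝ) := by exact_mod_cast hτ1
  have hτ0 : 0 < τ := hτ1
  have hτle : (τ:ℝ) ≤ 1 / (c * L * γ) := by
    rw [hτ]; exact Nat.floor_le (by positivity)
  have hρ : L * γ * (τ:ℝ) ≤ 1 / 13 := by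
    have h1 : L * γ * (τ:ℝ) ≤ L * γ * (1 / (c * L * γ)) :=
      mul_le_mul_of_nonneg_left hτle (by positivity)
    have h2 : L * γ * (1 / (c * L * γ)) = 1 / c := by field_simp
    have h3 : 1 / c ≤ 1 / 13 := by
      apply one_div_le_one_div_of_le (by norm_num) hc13
    linarith
  have hτ2 : 1 / (c * L * γ) ≤ 2 * (τ:ℝ) := by
    have h1 := Nat.lt_floor_add_one (1 / (c * L * γ))
    rw [← hτ] at h1
    push_cast at h1
    have hτR1 : (1:ℝ) ≤ (τ:ℝ) := by exact_mod_cast hτ1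
    linarith
  have h2cτ : (1:ℝ) ≤ 2 * (c * L * γ) * (τ:ℝ) := by
    have := mul_le_mul_of_nonneg_left hτ2 hcLγpos.le
    rw [mul_one_div, div_self (ne_of_gt hcLγpos)] at this
    linarith [this]
  -- gradient of f
  have hgrad : ∀ p, HasGradientAt f ((1 / n : ℝ) • ∑ i, gradient (f' i) p) p := by
    intro p
    rw [hf]
    exact avg_hasGradientAt f' hdiff p
  have hfeq : ∀ p, gradient f p = (1 / n : ℝ) • ∑ i, gradient (f' i) p :=
    fun p => (hgrad p).gradient
  have hfdiff : Differentiable ℝ f := fun p => (hgrad p).differentiableAt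
  have hnR : (1:ℝ) ≤ (n:ℝ) := by exact_mod_cast hn
  have hflip : ∀ p q, ‖gradient f p - gradient f q‖ ≤ L * ‖p - q‖ := by
    intro p q
    rw [hfeq p, hfeq q, ← smul_sub, ← Finset.sum_sub_distrib]
    rw [norm_smul, Real.norm_eq_abs, abs_of_pos (by positivity)]
    have h1 : ‖∑ i, (gradient (f' i) p - gradient (f' i) q)‖ ≤ (n:ℝ) * (L * ‖p - q‖) := by
      calc ‖∑ i, (gradient (f' i) p - gradient (f' i) q)‖
          ≤ ∑ i, ‖gradient (f' i) p - gradient (f' i) q‖ := norm_sum_le _ _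
        _ ≤ (Finset.univ : Finset (Fin n)).card • (L * ‖p - q‖) :=
            Finset.sum_le_card_nsmul _ _ _ (fun i _ => hlip i p q)
        _ = (n:ℝ) * (L * ‖p - q‖) := by
            rw [Finset.card_univ, Fintype.card_fin, nsmul_eq_mul]
    calc (1 / (n:ℝ)) * ‖∑ i, (gradient (f' i) p - gradient (f' i) q)‖
        ≤ (1 / (n:ℝ)) * ((n:ℝ) * (L * ‖p - q‖)) := by
          apply mul_le_mul_of_nonneg_left h1 (by positivity)
      _ = L * ‖p - q‖ := by field_simp
  have hσ0 : 0 ≤ σ2 := le_trans (by positivity) (hσ (x 0))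
  set N : ℝ := Real.sqrt (τ * σ2) with hN
  have hN0 : 0 ≤ N := Real.sqrt_nonneg _
  have hN2 : N ^ 2 = τ * σ2 := Real.sq_sqrt (by positivity)
  -- iterate sum identity
  have hsum : ∀ a b : ℕ, a ≤ b →
      x b - x a = -(γ • ∑ r ∈ Finset.Ico a b, gradient (f' (idx r)) (x r)) := by
    intro a b hab
    induction b, hab using Nat.le_induction with
    | base => simp
    | succ b hab ih =>
      rw [Finset.sum_Ico_succ_top hab, hx b, smul_add, neg_add, ← ih]
      abel
  -- prefix noise bound
  have hpre : ∀ k, k ≤ T / τ → ∀ e, k * τ ≤ e → e ≤ min (k * τ + τ) (T + 1) →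
      ∀ y : EuclideanSpace ℝ (Fin d),
      ‖∑ r ∈ Finset.Ico (k * τ) e, (gradient (f' (idx r)) y - gradient f y)‖ ≤ N := by
    intro k hk e he1 he2 y
    rw [le_min_iff] at he2
    rcases eq_or_lt_of_le he1 with h | h
    · rw [← h]
      simp [hN0]
    · have hj : e - 1 - k * τ < τ := by omega
      have hvar' := hvar y k hk (e - 1 - k * τ) hj
      have hmin : min (k * τ + (e - 1 - k * τ)) T = e - 1 := by
        have h1 : k * τ + (e - 1 - k * τ) = e - 1 := by omega
        rw [h1]
        exact min_eq_left (by omega)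
      rw [hmin] at hvar'
      have hIco : Finset.Ico (k * τ) e = Finset.Icc (k * τ) (e - 1) := by
        rw [← Finset.Ico_add_one_right_eq_Icc]
        congr 1
        omega
      rw [hIco]
      calc ‖∑ r ∈ Finset.Icc (k * τ) (e - 1), (gradient (f' (idx r)) y - gradient f y)‖
          = Real.sqrt (‖∑ r ∈ Finset.Icc (k * τ) (e - 1),
              (gradient (f' (idx r)) y - gradient f y)‖ ^ 2) :=
            (Real.sqrt_sq (norm_nonneg _)).symm
        _ ≤ Real.sqrt ((τ:ℝ) * σ2) := Real.sqrt_le_sqrt hvar'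
  -- decomposition of a sum of stochastic gradients
  have hdecomp : ∀ (s e : ℕ) (y : EuclideanSpace ℝ (Fin d)),
      ∑ r ∈ Finset.Ico s e, gradient (f' (idx r)) (x r)
      = (∑ r ∈ Finset.Ico s e, (gradient (f' (idx r)) (x r) - gradient (f' (idx r)) y))
        + (∑ r ∈ Finset.Ico s e, (gradient (f' (idx r)) y - gradient f y))
        + ((e - s : ℕ) : ℝ) • gradient f y := by
    intro s e y
    rw [Finset.sum_sub_distrib, Finset.sum_sub_distrib, Finset.sum_const, Nat.card_Ico,
      Nat.cast_smul_eq_nsmul]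
    abel
  -- deviation bound within an epoch
  have hdev : ∀ k, k ≤ T / τ → ∀ t, k * τ ≤ t → t ≤ min (k * τ + τ) (T + 1) →
      ‖x t - x (k * τ)‖ ≤ 2 * γ * (((t - k * τ : ℕ) : ℝ) * ‖gradient f (x (k * τ))‖ + N) := by
    intro k hk t
    induction t using Nat.strong_induction_on with
    | _ t IH =>
      intro ht1 ht2
      rcases eq_or_lt_of_le ht1 with h | h
      · rw [← h]
        simp only [sub_self, norm_zero, Nat.sub_self, Nat.cast_zero, zero_mul, zero_add]
        positivity
      · have hxts := hsum (k * τ) t (le_of_lt h)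
        rw [hxts, norm_neg, norm_smul, Real.norm_eq_abs, abs_of_pos hγ,
          hdecomp (k * τ) t (x (k * τ))]
        set G := gradient f (x (k * τ)) with hG
        set m : ℝ := ((t - k * τ : ℕ) : ℝ) with hm
        have hmτ : m ≤ (τ:ℝ) := by
          rw [hm]
          have h9 : t - k * τ ≤ τ := by
            have := le_min_iff.mp ht2
            omega
          exact_mod_cast h9
        have hm0 : 0 ≤ m := by rw [hm]; positivity
        have hb1 : ‖∑ r ∈ Finset.Ico (k * τ) t,
            (gradient (f' (idx r)) (x r) - gradient (f' (idx r)) (x (k * τ)))‖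
            ≤ m * (L * (2 * γ * ((τ:ℝ) * ‖G‖ + N))) := by
          calc ‖∑ r ∈ Finset.Ico (k * τ) t,
              (gradient (f' (idx r)) (x r) - gradient (f' (idx r)) (x (k * τ)))‖
              ≤ ∑ r ∈ Finset.Ico (k * τ) t,
                ‖gradient (f' (idx r)) (x r) - gradient (f' (idx r)) (x (k * τ))‖ :=
                norm_sum_le _ _
            _ ≤ (Finset.Ico (k * τ) t).card • (L * (2 * γ * ((τ:ℝ) * ‖G‖ + N))) := by
                apply Finset.sum_le_card_nsmul
                intro r hr
                rw [Finset.mem_Ico] at hr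
                have hr2 : r ≤ min (k * τ + τ) (T + 1) := le_trans (le_of_lt hr.2) ht2
                have hIHr := IH r hr.2 hr.1 hr2
                calc ‖gradient (f' (idx r)) (x r) - gradient (f' (idx r)) (x (k * τ))‖
                    ≤ L * ‖x r - x (k * τ)‖ := hlip _ _ _
                  _ ≤ L * (2 * γ * (((r - k * τ : ℕ) : ℝ) * ‖G‖ + N)) := by
                      apply mul_le_mul_of_nonneg_left hIHr hL.le
                  _ ≤ L * (2 * γ * ((τ:ℝ) * ‖G‖ + N)) := by
                      gcongr
                      have h9 : r - k * τ ≤ τ := by omega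
                      exact_mod_cast h9
            _ = m * (L * (2 * γ * ((τ:ℝ) * ‖G‖ + N))) := by
                rw [Nat.card_Ico, nsmul_eq_mul, hm]
        have hb2 : ‖∑ r ∈ Finset.Ico (k * τ) t, (gradient (f' (idx r)) (x (k * τ)) - gradient f (x (k * τ)))‖ ≤ N :=
          hpre k hk t ht1 ht2 (x (k * τ))
        have hb3 : ‖m • G‖ = m * ‖G‖ := by
          rw [norm_smul, Real.norm_eq_abs, abs_of_nonneg hm0]
        have hnorm3 : ‖(∑ r ∈ Finset.Ico (k * τ) t,
              (gradient (f' (idx r)) (x r) - gradient (f' (idx r)) (x (k * τ))))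
            + (∑ r ∈ Finset.Ico (k * τ) t,
              (gradient (f' (idx r)) (x (k * τ)) - gradient f (x (k * τ))))
            + m • G‖ ≤ m * (L * (2 * γ * ((τ:ℝ) * ‖G‖ + N))) + N + m * ‖G‖ := by
          calc ‖(∑ r ∈ Finset.Ico (k * τ) t,
              (gradient (f' (idx r)) (x r) - gradient (f' (idx r)) (x (k * τ))))
            + (∑ r ∈ Finset.Ico (k * τ) t,
              (gradient (f' (idx r)) (x (k * τ)) - gradient f (x (k * τ))))
            + m • G‖ ≤ ‖∑ r ∈ Finset.Ico (k * τ) t,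
              (gradient (f' (idx r)) (x r) - gradient (f' (idx r)) (x (k * τ)))‖
              + ‖∑ r ∈ Finset.Ico (k * τ) t,
              (gradient (f' (idx r)) (x (k * τ)) - gradient f (x (k * τ)))‖
              + ‖m • G‖ := norm_add₃_le
            _ ≤ m * (L * (2 * γ * ((τ:ℝ) * ‖G‖ + N))) + N + m * ‖G‖ := by
                rw [hb3]
                exact add_le_add (add_le_add hb1 hb2) le_rfl
        have hG0 : (0:ℝ) ≤ ‖G‖ := norm_nonneg _
        have hkey : m * (L * (2 * γ * ((τ:ℝ) * ‖G‖ + N))) + N + m * ‖G‖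
            ≤ 2 * (m * ‖G‖ + N) := by
          have u1 : L * γ * (τ:ℝ) * (m * ‖G‖) ≤ (1/13) * (m * ‖G‖) :=
            mul_le_mul_of_nonneg_right hρ (by positivity)
          have u2 : L * γ * m ≤ L * γ * (τ:ℝ) :=
            mul_le_mul_of_nonneg_left hmτ (by positivity)
          have u3 : L * γ * m * N ≤ (1/13) * N := by
            have := mul_le_mul_of_nonneg_right (le_trans u2 hρ) hN0
            linarith
          linarith [u1, u3, mul_nonneg hm0 hG0, hN0]
        calc γ * ‖(∑ r ∈ Finset.Ico (k * τ) t,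
              (gradient (f' (idx r)) (x r) - gradient (f' (idx r)) (x (k * τ))))
            + (∑ r ∈ Finset.Ico (k * τ) t,
              (gradient (f' (idx r)) (x (k * τ)) - gradient f (x (k * τ))))
            + m • G‖ ≤ γ * (m * (L * (2 * γ * ((τ:ℝ) * ‖G‖ + N))) + N + m * ‖G‖) :=
              mul_le_mul_of_nonneg_left hnorm3 hγ.le
          _ ≤ γ * (2 * (m * ‖G‖ + N)) := mul_le_mul_of_nonneg_left hkey hγ.le
          _ = 2 * γ * (m * ‖G‖ + N) := by ring
  -- full epoch descent
  have hepoch : ∀ k, k < T / τ →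
      f (x (k * τ + τ)) ≤ f (x (k * τ))
        - γ * (τ:ℝ) / 4 * ‖gradient f (x (k * τ))‖ ^ 2 + 5 * γ * σ2 := by
    intro k hkK
    have hk : k ≤ T / τ := le_of_lt hkK
    have he : k * τ + τ ≤ T := by
      calc k * τ + τ = (k + 1) * τ := by ring
        _ ≤ (T / τ) * τ := Nat.mul_le_mul_right τ hkK
        _ ≤ T := Nat.div_mul_le_self T τ
    set G := gradient f (x (k * τ)) with hG
    set P : ℝ := ‖G‖ with hP
    have hG0 : (0:ℝ) ≤ P := norm_nonneg _
    have hsmin : k * τ + τ ≤ min (k * τ + τ) (T + 1) := le_min le_rfl (by omega)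
    have hdel : ‖x (k * τ + τ) - x (k * τ)‖ ≤ 2 * γ * ((τ:ℝ) * P + N) := by
      have h9 := hdev k hk (k * τ + τ) (by omega) hsmin
      have h10 : k * τ + τ - k * τ = τ := by omega
      rw [h10] at h9
      exact h9
    set D := ∑ r ∈ Finset.Ico (k * τ) (k * τ + τ),
      (gradient (f' (idx r)) (x r) - gradient (f' (idx r)) (x (k * τ))) with hD
    set S' := ∑ r ∈ Finset.Ico (k * τ) (k * τ + τ),
      (gradient (f' (idx r)) (x (k * τ)) - gradient f (x (k * τ))) with hS'
    have hW : x (k * τ + τ) - x (k * τ) = -(γ • (D + S' + (τ:ℝ) • G)) := by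
      rw [hsum (k * τ) (k * τ + τ) (by omega), hdecomp (k * τ) (k * τ + τ) (x (k * τ))]
      have h10 : k * τ + τ - k * τ = τ := by omega
      rw [h10, ← hD, ← hS', ← hG]
    have hDb : ‖D‖ ≤ (τ:ℝ) * (L * (2 * γ * ((τ:ℝ) * P + N))) := by
      rw [hD]
      calc ‖∑ r ∈ Finset.Ico (k * τ) (k * τ + τ),
          (gradient (f' (idx r)) (x r) - gradient (f' (idx r)) (x (k * τ)))‖
          ≤ ∑ r ∈ Finset.Ico (k * τ) (k * τ + τ),
            ‖gradient (f' (idx r)) (x r) - gradient (f' (idx r)) (x (k * τ))‖ :=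
            norm_sum_le _ _
        _ ≤ (Finset.Ico (k * τ) (k * τ + τ)).card • (L * (2 * γ * ((τ:ℝ) * P + N))) := by
            apply Finset.sum_le_card_nsmul
            intro r hr
            rw [Finset.mem_Ico] at hr
            have hr2 : r ≤ min (k * τ + τ) (T + 1) := le_trans (le_of_lt hr.2) hsmin
            have hdevr := hdev k hk r hr.1 hr2
            calc ‖gradient (f' (idx r)) (x r) - gradient (f' (idx r)) (x (k * τ))‖
                ≤ L * ‖x r - x (k * τ)‖ := hlip _ _ _
              _ ≤ L * (2 * γ * (((r - k * τ : ℕ) : ℝ) * P + N)) := by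
                  apply mul_le_mul_of_nonneg_left hdevr hL.le
              _ ≤ L * (2 * γ * ((τ:ℝ) * P + N)) := by
                  gcongr
                  have h9 : r - k * τ ≤ τ := by omega
                  exact_mod_cast h9
        _ = (τ:ℝ) * (L * (2 * γ * ((τ:ℝ) * P + N))) := by
            rw [Nat.card_Ico, nsmul_eq_mul]
            congr 2
            omega
    have hSb : ‖S'‖ ≤ N := by
      rw [hS']
      exact hpre k hk (k * τ + τ) (by omega) hsmin (x (k * τ))
    have hdesc := descent_lemma hL.le hfdiff hflip (x (k * τ)) (x (k * τ + τ))
    rw [← hG] at hdesc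
    have hinner : (inner ℝ G (x (k * τ + τ) - x (k * τ)) : ℝ)
        = -(γ * ((inner ℝ G D : ℝ) + (inner ℝ G S' : ℝ) + (τ:ℝ) * P ^ 2)) := by
      rw [hW, inner_neg_right, real_inner_smul_right, inner_add_right, inner_add_right,
        real_inner_smul_right, real_inner_self_eq_norm_sq, ← hP]
    have hGD : -(P * ‖D‖) ≤ (inner ℝ G D : ℝ) :=
      le_trans (neg_le_neg (abs_real_inner_le_norm G D)) (neg_abs_le _)
    have hGS : -(P * N) ≤ (inner ℝ G S' : ℝ) := by
      have h1 : P * ‖S'‖ ≤ P * N := mul_le_mul_of_nonneg_left hSb hG0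
      have h2 := le_trans (neg_le_neg (abs_real_inner_le_norm G S')) (neg_abs_le _)
      linarith
    have hIle : (inner ℝ G (x (k * τ + τ) - x (k * τ)) : ℝ)
        ≤ -(γ * ((τ:ℝ) * P ^ 2)) + γ * (P * ((τ:ℝ) * (L * (2 * γ * ((τ:ℝ) * P + N)))))
          + γ * (P * N) := by
      rw [hinner]
      have m1 := mul_le_mul_of_nonneg_left hGD hγ.le
      have m2 := mul_le_mul_of_nonneg_left hGS hγ.le
      have m3 : γ * (P * ‖D‖) ≤ γ * (P * ((τ:ℝ) * (L * (2 * γ * ((τ:ℝ) * P + N))))) :=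
        mul_le_mul_of_nonneg_left (mul_le_mul_of_nonneg_left hDb hG0) hγ.le
      nlinarith [m1, m2, m3]
    have hΔ2 : L / 2 * ‖x (k * τ + τ) - x (k * τ)‖ ^ 2
        ≤ L / 2 * (2 * γ * ((τ:ℝ) * P + N)) ^ 2 := by
      apply mul_le_mul_of_nonneg_left _ (by positivity)
      exact pow_le_pow_left₀ (norm_nonneg _) hdel 2
    -- numeric combination
    have a1 : L * γ * (τ:ℝ) * (γ * (τ:ℝ) * P ^ 2) ≤ 1 / 13 * (γ * (τ:ℝ) * P ^ 2) :=
      mul_le_mul_of_nonneg_right hρ (by positivity)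
    have a2 : L * γ * (τ:ℝ) * (γ * (P * N)) ≤ 1 / 13 * (γ * (P * N)) :=
      mul_le_mul_of_nonneg_right hρ (by positivity)
    have a3 : L * γ * (τ:ℝ) * (γ * σ2) ≤ 1 / 13 * (γ * σ2) :=
      mul_le_mul_of_nonneg_right hρ (by positivity)
    have a4' : (τ:ℝ) * (P * N) ≤ (τ:ℝ) * ((τ:ℝ) / 8 * P ^ 2 + 2 * σ2) := by
      nlinarith [sq_nonneg ((τ:ℝ) * P - 4 * N), hN2]
    have a4 : γ * (P * N) ≤ γ * ((τ:ℝ) / 8 * P ^ 2 + 2 * σ2) :=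
      mul_le_mul_of_nonneg_left ((mul_le_mul_iff_right₀ hτpos).mp a4') hγ.le
    have key : -(γ * ((τ:ℝ) * P ^ 2)) + γ * (P * ((τ:ℝ) * (L * (2 * γ * ((τ:ℝ) * P + N)))))
          + γ * (P * N) + L / 2 * (2 * γ * ((τ:ℝ) * P + N)) ^ 2
        ≤ -(γ * (τ:ℝ) / 4 * P ^ 2) + 5 * γ * σ2 := by
      have e1 : γ * (P * ((τ:ℝ) * (L * (2 * γ * ((τ:ℝ) * P + N)))))
          = 2 * (L * γ * (τ:ℝ) * (γ * (τ:ℝ) * P ^ 2)) + 2 * (L * γ * (τ:ℝ) * (γ * (P * N))) := by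
        ring
      have e2 : L / 2 * (2 * γ * ((τ:ℝ) * P + N)) ^ 2
          = 2 * (L * γ * (τ:ℝ) * (γ * (τ:ℝ) * P ^ 2)) + 4 * (L * γ * (τ:ℝ) * (γ * (P * N)))
            + 2 * (L * γ * (γ * N ^ 2)) := by
        ring
      have e3 : 2 * (L * γ * (γ * N ^ 2)) = 2 * (L * γ * (τ:ℝ) * (γ * σ2)) := by
        rw [hN2]; ring
      rw [e1, e2, e3]
      linarith [a1, a2, a3, a4, show (0:ℝ) ≤ γ * (τ:ℝ) * P ^ 2 by positivity,
        show (0:ℝ) ≤ γ * σ2 by positivity]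
    linarith [hdesc, hIle, hΔ2, key]
  -- telescoped descent over full epochs
  have htel : ∀ M, M ≤ T / τ →
      γ * (τ:ℝ) / 4 * ∑ k ∈ Finset.range M, ‖gradient f (x (k * τ))‖ ^ 2
        ≤ f (x 0) - f (x (M * τ)) + 5 * γ * σ2 * (M:ℝ) := by
    intro M
    induction M with
    | zero => intro _; simp
    | succ M ih =>
      intro hM1
      have hM : M ≤ T / τ := by omega
      have hMK : M < T / τ := by omega
      have h1 := ih hM
      have h2 := hepoch M hMK
      rw [Finset.sum_range_succ]
      have h3 : (M + 1) * τ = M * τ + τ := by ring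
      rw [h3]
      push_cast
      linarith [h1, h2]
  -- pointwise bound on each gradient through its epoch anchor
  have hpt : ∀ t, t ≤ T → ‖gradient f (x t)‖ ^ 2
      ≤ 3 * ‖gradient f (x ((t / τ) * τ))‖ ^ 2 + L * γ * σ2 := by
    intro t ht
    have hk : t / τ ≤ T / τ := Nat.div_le_div_right ht
    have ht1 : (t / τ) * τ ≤ t := Nat.div_mul_le_self t τ
    have ht2 : t ≤ min ((t / τ) * τ + τ) (T + 1) := by
      have h9 : t < (t / τ) * τ + τ := by
        have e1 := Nat.div_add_mod t τ
        have e2 := Nat.mod_lt t hτ0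
        calc t = τ * (t / τ) + t % τ := e1.symm
          _ < τ * (t / τ) + τ := Nat.add_lt_add_left e2 _
          _ = (t / τ) * τ + τ := by ring
      exact le_min (le_of_lt h9) (by omega)
    have hdevt := hdev (t / τ) hk t ht1 ht2
    set P : ℝ := ‖gradient f (x ((t / τ) * τ))‖ with hPdef
    have hP0 : (0:ℝ) ≤ P := norm_nonneg _
    have hm : ((t - (t / τ) * τ : ℕ) : ℝ) ≤ (τ:ℝ) := by
      have h9 : t - (t / τ) * τ ≤ τ := by omega
      exact_mod_cast h9
    have h5 : ‖x t - x ((t / τ) * τ)‖ ≤ 2 * γ * ((τ:ℝ) * P + N) := by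
      refine le_trans hdevt ?_
      gcongr
    have h6 : ‖gradient f (x t)‖ ≤ P + L * (2 * γ * ((τ:ℝ) * P + N)) := by
      calc ‖gradient f (x t)‖
          = ‖gradient f (x ((t / τ) * τ)) + (gradient f (x t) - gradient f (x ((t / τ) * τ)))‖ := by
            congr 1; abel
        _ ≤ P + ‖gradient f (x t) - gradient f (x ((t / τ) * τ))‖ := norm_add_le _ _
        _ ≤ P + L * ‖x t - x ((t / τ) * τ)‖ := by
            exact add_le_add_right (hflip _ _) _
        _ ≤ P + L * (2 * γ * ((τ:ℝ) * P + N)) := by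
            exact add_le_add_right (mul_le_mul_of_nonneg_left h5 hL.le) _
    have h7 : ‖gradient f (x t)‖ ≤ (15 / 13) * P + 2 * L * γ * N := by
      have h8 : 2 * (L * γ * (τ:ℝ)) * P ≤ (2 / 13) * P := by
        have := mul_le_mul_of_nonneg_right hρ hP0
        linarith
      have h9 : L * (2 * γ * ((τ:ℝ) * P + N)) = 2 * (L * γ * (τ:ℝ)) * P + 2 * L * γ * N := by
        ring
      linarith [h6]
    have hsq : ‖gradient f (x t)‖ ^ 2 ≤ ((15 / 13) * P + 2 * L * γ * N) ^ 2 :=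
      pow_le_pow_left₀ (norm_nonneg _) h7 2
    have hQ2 : (2 * L * γ * N) ^ 2 ≤ (4 / 13) * (L * γ * σ2) := by
      have e : (2 * L * γ * N) ^ 2 = 4 * ((L * γ * (τ:ℝ)) * (L * γ * σ2)) := by
        calc (2 * L * γ * N) ^ 2 = 4 * L ^ 2 * γ ^ 2 * N ^ 2 := by ring
          _ = 4 * L ^ 2 * γ ^ 2 * ((τ:ℝ) * σ2) := by rw [hN2]
          _ = 4 * ((L * γ * (τ:ℝ)) * (L * γ * σ2)) := by ring
      rw [e]
      have := mul_le_mul_of_nonneg_right hρ (show (0:ℝ) ≤ L * γ * σ2 by positivity)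
      linarith
    have hPQ : P * (2 * L * γ * N) ≤ (P ^ 2 + (2 * L * γ * N) ^ 2) / 2 := by
      nlinarith [sq_nonneg (P - 2 * L * γ * N)]
    linarith [hsq, hQ2, hPQ, sq_nonneg P, show (0:ℝ) ≤ L * γ * σ2 by positivity]
  -- counting: each epoch index appears at most τ times
  have hcount : ∑ t ∈ Finset.range (T + 1), ‖gradient f (x ((t / τ) * τ))‖ ^ 2
      ≤ (τ:ℝ) * ∑ k ∈ Finset.range (T / τ + 1), ‖gradient f (x (k * τ))‖ ^ 2 := by
    have h1 := Finset.sum_comp (s := Finset.range (T + 1))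
      (fun k => ‖gradient f (x (k * τ))‖ ^ 2) (fun t => t / τ)
    rw [h1]
    have h2 : ∀ b ∈ (Finset.range (T + 1)).image (fun t => t / τ),
        ((Finset.range (T + 1)).filter (fun a => a / τ = b)).card
          • ‖gradient f (x (b * τ))‖ ^ 2 ≤ (τ:ℝ) * ‖gradient f (x (b * τ))‖ ^ 2 := by
      intro b _
      rw [nsmul_eq_mul]
      apply mul_le_mul_of_nonneg_right _ (by positivity)
      have h3 : (Finset.range (T + 1)).filter (fun a => a / τ = b)
          ⊆ Finset.Ico (b * τ) (b * τ + τ) := by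
        intro a ha
        simp only [Finset.mem_filter, Finset.mem_range] at ha
        rw [Finset.mem_Ico]
        obtain ⟨-, hab⟩ := ha
        subst hab
        constructor
        · exact Nat.div_mul_le_self a τ
        · have e1 := Nat.div_add_mod a τ
          have e2 := Nat.mod_lt a hτ0
          calc a = τ * (a / τ) + a % τ := e1.symm
            _ < τ * (a / τ) + τ := Nat.add_lt_add_left e2 _
            _ = a / τ * τ + τ := by ring
      have h4 : ((Finset.range (T + 1)).filter (fun a => a / τ = b)).card ≤ τ := by
        have := Finset.card_le_card h3
        rwa [Nat.card_Ico, Nat.add_sub_cancel_left] at this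
      exact_mod_cast h4
    calc ∑ b ∈ (Finset.range (T + 1)).image (fun t => t / τ),
        ((Finset.range (T + 1)).filter (fun a => a / τ = b)).card
          • ‖gradient f (x (b * τ))‖ ^ 2
        ≤ ∑ b ∈ (Finset.range (T + 1)).image (fun t => t / τ),
          (τ:ℝ) * ‖gradient f (x (b * τ))‖ ^ 2 := Finset.sum_le_sum h2
      _ ≤ ∑ b ∈ Finset.range (T / τ + 1), (τ:ℝ) * ‖gradient f (x (b * τ))‖ ^ 2 := by
          apply Finset.sum_le_sum_of_subset_of_nonneg
          · intro b hb
            rw [Finset.mem_image] at hb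
            obtain ⟨t, ht, rfl⟩ := hb
            rw [Finset.mem_range] at ht ⊢
            have h9 : t / τ ≤ T / τ := Nat.div_le_div_right (show t ≤ T by omega)
            omega
          · intro i _ _
            positivity
      _ = (τ:ℝ) * ∑ k ∈ Finset.range (T / τ + 1), ‖gradient f (x (k * τ))‖ ^ 2 := by
          rw [Finset.mul_sum]
  -- assemble everything
  set K := T / τ with hK
  have hKτT : K * τ ≤ T := Nat.div_mul_le_self T τ
  have hKle : (K:ℝ) ≤ 28 * (L * γ) * ((T:ℝ) + 1) := by
    have h2 : (K:ℝ) * (τ:ℝ) ≤ (T:ℝ) := by exact_mod_cast hKτT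
    have hTnn : (0:ℝ) ≤ (T:ℝ) := Nat.cast_nonneg T
    calc (K:ℝ) = (K:ℝ) * 1 := by ring
      _ ≤ (K:ℝ) * (2 * (c * L * γ) * (τ:ℝ)) :=
          mul_le_mul_of_nonneg_left h2cτ (Nat.cast_nonneg K)
      _ = 2 * (c * L * γ) * ((K:ℝ) * (τ:ℝ)) := by ring
      _ ≤ 2 * (c * L * γ) * ((T:ℝ) + 1) := by
          apply mul_le_mul_of_nonneg_left _ (by positivity)
          linarith
      _ ≤ 28 * (L * γ) * ((T:ℝ) + 1) := by
          have hnn : (0:ℝ) ≤ L * γ * ((T:ℝ) + 1) := by positivity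
          have h2c : 2 * c ≤ 28 := by linarith
          calc 2 * (c * L * γ) * ((T:ℝ) + 1) = (2 * c) * (L * γ * ((T:ℝ) + 1)) := by ring
            _ ≤ 28 * (L * γ * ((T:ℝ) + 1)) := mul_le_mul_of_nonneg_right h2c hnn
            _ = 28 * (L * γ) * ((T:ℝ) + 1) := by ring
  have htelK := htel K le_rfl
  have hvalK : f (x (K * τ)) ≤ f (x 0) + 5 * γ * σ2 * (K:ℝ) := by
    have h1 : 0 ≤ γ * (τ:ℝ) / 4 * ∑ k ∈ Finset.range K, ‖gradient f (x (k * τ))‖ ^ 2 := by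
      positivity
    linarith [htelK]
  have hqK : ‖gradient f (x (K * τ))‖ ^ 2 ≤ 2 * L * (f (x (K * τ)) - fstar) :=
    grad_sq_le hL hfdiff hflip hfstar _
  have hF0 : 0 ≤ f (x 0) - fstar := by linarith [hfstar (x 0)]
  have hX0 : 0 ≤ f (x (K * τ)) - fstar := by linarith [hfstar (x (K * τ))]
  have hsum1 : ∑ t ∈ Finset.range (T + 1), ‖gradient f (x t)‖ ^ 2
      ≤ 3 * ((τ:ℝ) * ∑ k ∈ Finset.range (K + 1), ‖gradient f (x (k * τ))‖ ^ 2)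
        + ((T:ℝ) + 1) * (L * γ * σ2) := by
    calc ∑ t ∈ Finset.range (T + 1), ‖gradient f (x t)‖ ^ 2
        ≤ ∑ t ∈ Finset.range (T + 1),
          (3 * ‖gradient f (x ((t / τ) * τ))‖ ^ 2 + L * γ * σ2) := by
          apply Finset.sum_le_sum
          intro t ht
          rw [Finset.mem_range] at ht
          exact hpt t (by omega)
      _ = 3 * (∑ t ∈ Finset.range (T + 1), ‖gradient f (x ((t / τ) * τ))‖ ^ 2)
          + ((T:ℝ) + 1) * (L * γ * σ2) := by
          rw [Finset.sum_add_distrib, Finset.sum_const, Finset.card_range, ← Finset.mul_sum,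
            nsmul_eq_mul]
          push_cast
          ring
      _ ≤ 3 * ((τ:ℝ) * ∑ k ∈ Finset.range (K + 1), ‖gradient f (x (k * τ))‖ ^ 2)
          + ((T:ℝ) + 1) * (L * γ * σ2) := by
          have := mul_le_mul_of_nonneg_left hcount (show (0:ℝ) ≤ 3 by norm_num)
          linarith
  have hSsplit : ∑ k ∈ Finset.range (K + 1), ‖gradient f (x (k * τ))‖ ^ 2
      = ∑ k ∈ Finset.range K, ‖gradient f (x (k * τ))‖ ^ 2
        + ‖gradient f (x (K * τ))‖ ^ 2 := Finset.sum_range_succ _ _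
  have hKEY : γ * ∑ t ∈ Finset.range (T + 1), ‖gradient f (x t)‖ ^ 2
      ≤ 2000 * (f (x 0) - fstar) + 2000 * (L * γ ^ 2 * σ2 * ((T:ℝ) + 1)) := by
    have m1 := mul_le_mul_of_nonneg_left hsum1 hγ.le
    rw [hSsplit] at m1
    have m2 : L * γ * (τ:ℝ) * (f (x (K * τ)) - fstar)
        ≤ (1 / 13) * (f (x (K * τ)) - fstar) := mul_le_mul_of_nonneg_right hρ hX0
    have m3 : γ * σ2 * (K:ℝ) ≤ γ * σ2 * (28 * (L * γ) * ((T:ℝ) + 1)) :=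
      mul_le_mul_of_nonneg_left hKle (by positivity)
    have m4 := mul_le_mul_of_nonneg_left hqK (show (0:ℝ) ≤ 3 * γ * (τ:ℝ) by positivity)
    have m5 : (0:ℝ) ≤ L * γ ^ 2 * σ2 * ((T:ℝ) + 1) := by positivity
    linarith [htelK, hvalK, m1, m2, m3, m4, hF0, hX0, m5]
  have hT1 : (0:ℝ) < (T:ℝ) + 1 := by positivity
  rw [one_div_mul_eq_div, div_le_iff₀ hT1]
  apply (mul_le_mul_iff_right₀ hγ).mp
  have hexp2 : γ * (2000 * ((f (x 0) - fstar) / (γ * ((T:ℝ) + 1)) + L * γ * σ2) * ((T:ℝ) + 1))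
      = 2000 * (f (x 0) - fstar) + 2000 * (L * γ ^ 2 * σ2 * ((T:ℝ) + 1)) := by
    field_simp
  rw [hexp2]
  exact hKEY
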